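/- arXiv:1604.01470 — 3 statements merged into one kernel-verified Lean document; each statement's English description precedes it below -/
import Mathlib

section
/- The set U is dense in [0,1]. -/
/-!
Every set in the intersection is a union of relative interiors, hence open in `[0,1]`, so by
Baire's theorem it suffices that each one accumulates at every `x ∈ (0,1]`. Let `w` be the first
`k` digits of `x`. On the cylinder `I(w)` the map `T_β^k` is affine of slope `β^k` and takes every
value in `(0, T_β^k y]` for each of its points `y`; moving `x` up until some iterate `T_β^i`
(`i ≤ k`) reaches `1` produces a `y` with `T_β^k y = T_β^{k-i} 1 > β^{-(Γ_k+1)}`. Since `z / β^s`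
has the expansion `0^s` followed by that of `z`, the word `w 0^{Γ_k+1}` may then be followed by
any admissible word, and `ω_1 ⋯ ω_k` is admissible by the same argument, as
`T_β^m 1 > β^{-(t_m+1)}`. The resulting cylinder lies in `I(w)`, whose points are within `β^{-k}`
of `x`.
-/

open MeasureTheory Filter Set

noncomputable section

/-- The β-transformation on `(0,1]`: `T_β x = βx − ⌈βx⌉ + 1`. -/
def Tbeta (β x : ℝ) : ℝ := β * x - ⌈β * x⌉ + 1

/-- The digits of the β-expansion, 0-indexed: `eps β x n` is the `(n+1)`-st digit
`ε_{n+1}(x,β) = ⌈β T_β^n x⌉ − 1`. -/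
def eps (β x : ℝ) (n : ℕ) : ℤ := ⌈β * (Tbeta β)^[n] x⌉ - 1

/-- The basic interval of order `n` containing `x`:
all `y ∈ (0,1]` whose first `n` digits agree with those of `x`. -/
def In (β x : ℝ) (n : ℕ) : Set ℝ := {y ∈ Ioc (0:ℝ) 1 | ∀ j < n, eps β y j = eps β x j}

/-- The length of a set (Lebesgue measure). -/
def len (s : Set ℝ) : ℝ := (volume s).toReal

/-- `tseq β n = t_n`: the maximal length of the block of zero digits of the
β-expansion of `1` immediately following position `n` (digits `ε*_{n+1},…,ε*_{n+k}`). -/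
def tseq (β : ℝ) (n : ℕ) : ℕ := sSup {k : ℕ | ∀ j < k, eps β 1 (n + j) = 0}

/-- `Gam β n = Γ_n = max_{1 ≤ k ≤ n} t_k`. -/
def Gam (β : ℝ) (n : ℕ) : ℕ := Finset.sup (Finset.Icc 1 n) (tseq β)

/-- `lam β = λ(β) = limsup_n Γ_n / n`. -/
def lam (β : ℝ) : ℝ := Filter.limsup (fun n : ℕ => (Gam β n : ℝ) / n) atTop

/-- `kstar β x n = k_n^*(x)`: the smallest `k ≥ 0` such that
`(ε_{k+1}(x),…,ε_n(x)) = (ε*_1,…,ε*_{n−k})`. -/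
def kstar (β x : ℝ) (n : ℕ) : ℕ := sInf {k : ℕ | ∀ i < n - k, eps β x (k + i) = eps β 1 i}

/-- `tau β x = τ(x) = limsup_n t_{n − k_n^*(x)} / n`. -/
def tau (β x : ℝ) : ℝ :=
  Filter.limsup (fun n : ℕ => (tseq β (n - kstar β x n) : ℝ) / n) atTop

/-- The upper density `\overline{D}(x) = limsup_n (−log_β |I_n(x)|)/n`. -/
def upperD (β x : ℝ) : ℝ :=
  Filter.limsup (fun n : ℕ => -Real.logb β (len (In β x n)) / n) atTop

/-- The lower density `\underline{D}(x) = liminf_n (−log_β |I_n(x)|)/n`. -/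
def lowerD (β x : ℝ) : ℝ :=
  Filter.liminf (fun n : ℕ => -Real.logb β (len (In β x n)) / n) atTop

/-- The basic interval (cylinder) associated to a finite word `w` of digits:
all `x ∈ (0,1]` whose β-expansion starts with `w`. -/
def cyl (β : ℝ) (w : List ℤ) : Set ℝ :=
  {x ∈ Ioc (0:ℝ) 1 | ∀ j < w.length, eps β x j = w.getD j 0}

/-- A finite word is admissible if it occurs as the initial digits of some `x ∈ (0,1]`. -/
def Admissible (β : ℝ) (w : List ℤ) : Prop := (cyl β w).Nonempty

/-- A basic interval is full if its length is `β^{−n}` where `n` is the order. -/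
def IsFull (β : ℝ) (w : List ℤ) : Prop := len (cyl β w) = β ^ (-(w.length : ℤ))

/-- The word `(ε*_1,…,ε*_n)` of the first `n` digits of the β-expansion of `1`. -/
def estarWord (β : ℝ) (n : ℕ) : List ℤ := (List.range n).map (eps β 1)

/-- The interior of a set relative to the subspace `[0,1]`
(for `S ⊆ [0,1]` this is exactly the interior of `S` in the topology of `[0,1]`). -/
def intIn01 (S : Set ℝ) : Set ℝ := Icc 0 1 \ closure (Icc 0 1 \ S)

section Digits

variable {β x y z : ℝ} {u v w : List ℤ}

lemma Tbeta_mem_Ioc (hβ : 0 < β) (hx : x ∈ Ioc (0:ℝ) 1) : Tbeta β x ∈ Ioc (0:ℝ) 1 := by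
  have := Int.ceil_lt_add_one (β * x)
  have := Int.le_ceil (β * x)
  have := mul_pos hβ hx.1
  constructor <;> simp only [Tbeta] <;> linarith

lemma iterate_Tbeta_mem_Ioc (hβ : 0 < β) (hx : x ∈ Ioc (0:ℝ) 1) (n : ℕ) :
    (Tbeta β)^[n] x ∈ Ioc (0:ℝ) 1 := by
  induction n with
  | zero => exact hx
  | succ n ih => rw [Function.iterate_succ_apply']; exact Tbeta_mem_Ioc hβ ih

lemma iterate_Tbeta_succ (n : ℕ) :
    (Tbeta β)^[n + 1] x = β * (Tbeta β)^[n] x - eps β x n := by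
  rw [Function.iterate_succ_apply']
  simp only [Tbeta, eps]; push_cast; ring

lemma eps_iterate_Tbeta (m j : ℕ) : eps β ((Tbeta β)^[m] x) j = eps β x (m + j) := by
  simp only [eps, ← Function.iterate_add_apply, Nat.add_comm j m]

lemma eps_nonneg (hβ : 0 < β) (hx : x ∈ Ioc (0:ℝ) 1) (n : ℕ) : 0 ≤ eps β x n := by
  have : (0:ℤ) < ⌈β * (Tbeta β)^[n] x⌉ :=
    Int.lt_ceil.mpr (by exact_mod_cast mul_pos hβ (iterate_Tbeta_mem_Ioc hβ hx n).1)
  simp only [eps]; omega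

lemma eps_eq_of_mem_Ioc {e : ℤ} {n : ℕ} (h : β * (Tbeta β)^[n] x - e ∈ Ioc (0:ℝ) 1) :
    eps β x n = e := by
  have h1 : ⌈β * (Tbeta β)^[n] x - e⌉ ≤ 1 := Int.ceil_le.mpr (by exact_mod_cast h.2)
  have h2 : 0 < ⌈β * (Tbeta β)^[n] x - e⌉ := Int.lt_ceil.mpr (by exact_mod_cast h.1)
  rw [Int.ceil_sub_intCast] at h1 h2
  simp only [eps]; omega

lemma iterate_Tbeta_sub_iterate_Tbeta {n : ℕ} (h : ∀ j < n, eps β y j = eps β x j) :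
    (Tbeta β)^[n] y - (Tbeta β)^[n] x = β ^ n * (y - x) := by
  induction n with
  | zero => simp
  | succ n ih =>
    have hn : (eps β y n : ℝ) = eps β x n := by exact_mod_cast h n n.lt_succ_self
    rw [iterate_Tbeta_succ, iterate_Tbeta_succ, hn, pow_succ]
    linear_combination β * ih fun j hj => h j (Nat.lt_succ_of_lt hj)

lemma iterate_Tbeta_le_pow_mul (hβ : 0 < β) (hx : x ∈ Ioc (0:ℝ) 1) (n : ℕ) :
    (Tbeta β)^[n] x ≤ β ^ n * x := by
  induction n with
  | zero => simp
  | succ n ih =>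
    have : (0:ℝ) ≤ eps β x n := by exact_mod_cast eps_nonneg hβ hx n
    rw [iterate_Tbeta_succ, pow_succ']
    nlinarith

lemma iterate_Tbeta_eq_pow_mul {k : ℕ} (h : ∀ j < k, eps β z j = 0) :
    (Tbeta β)^[k] z = β ^ k * z := by
  induction k with
  | zero => simp
  | succ k ih =>
    rw [iterate_Tbeta_succ, ih fun j hj => h j (Nat.lt_succ_of_lt hj), h k k.lt_succ_self]
    push_cast; ring

lemma eps_eq_zero_of_pow_mul_le_one (hβ : 1 ≤ β) (hz : 0 < z) {k : ℕ} (h : β ^ k * z ≤ 1) :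
    ∀ j < k, eps β z j = 0 := by
  induction k with
  | zero => simp
  | succ k ih =>
    have hk : β ^ k * z ≤ 1 :=
      le_trans (mul_le_mul_of_nonneg_right (pow_le_pow_right₀ hβ k.le_succ) hz.le) h
    intro j hj
    rcases Nat.lt_succ_iff_lt_or_eq.mp hj with hj | rfl
    · exact ih hk j hj
    · refine eps_eq_of_mem_Ioc ?_
      rw [iterate_Tbeta_eq_pow_mul (ih hk), ← mul_assoc, ← pow_succ']
      push_cast
      exact ⟨by rw [sub_zero]; positivity, by linarith⟩

lemma add_mem_In {δ : ℝ} {n : ℕ} (h : ∀ j ≤ n, (Tbeta β)^[j] x + β ^ j * δ ∈ Ioc (0:ℝ) 1) :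
    x + δ ∈ In β x n := by
  induction n with
  | zero => exact ⟨by simpa using h 0 le_rfl, fun j hj => absurd hj j.not_lt_zero⟩
  | succ n ih =>
    obtain ⟨hmem, hdig⟩ := ih fun j hj => h j (hj.trans n.le_succ)
    refine ⟨hmem, fun j hj => ?_⟩
    rcases Nat.lt_succ_iff_lt_or_eq.mp hj with hj | rfl
    · exact hdig j hj
    · refine eps_eq_of_mem_Ioc ?_
      have hn : (Tbeta β)^[j] (x + δ) = (Tbeta β)^[j] x + β ^ j * δ := by
        linear_combination iterate_Tbeta_sub_iterate_Tbeta hdig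
      convert h (j + 1) le_rfl using 1
      rw [hn, iterate_Tbeta_succ, pow_succ]
      ring

lemma Ioc_sub_subset_In (hβ : 0 < β) (hx : x ∈ Ioc (0:ℝ) 1) (n : ℕ) :
    Ioc (x - (Tbeta β)^[n] x / β ^ n) x ⊆ In β x n := by
  rintro z ⟨hlo, hhi⟩
  have hβn : 0 < β ^ n := pow_pos hβ n
  have hlo' : -(Tbeta β)^[n] x < β ^ n * (z - x) := by
    have := (lt_div_iff₀ hβn).mp (by linarith : x - z < (Tbeta β)^[n] x / β ^ n)
    linarith
  simpa using add_mem_In (x := x) (δ := z - x) fun j hj => by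
    have hTj := iterate_Tbeta_mem_Ioc hβ hx j
    have hβj : 0 < β ^ j := pow_pos hβ j
    have hsplit : β ^ n = β ^ (n - j) * β ^ j := by rw [← pow_add, Nat.sub_add_cancel hj]
    have hTn : (Tbeta β)^[n] x ≤ β ^ (n - j) * (Tbeta β)^[j] x := by
      have := iterate_Tbeta_le_pow_mul hβ hTj (n - j)
      rwa [← Function.iterate_add_apply, Nat.sub_add_cancel hj] at this
    refine ⟨pos_of_mul_pos_right (a := β ^ (n - j)) ?_ (pow_pos hβ _).le, ?_⟩
    · rw [hsplit] at hlo'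
      nlinarith
    · linarith [hTj.2, mul_nonpos_of_nonneg_of_nonpos hβj.le (sub_nonpos.mpr hhi)]

lemma exists_mem_In_iterate_eq (hβ : 0 < β) (hx : x ∈ Ioc (0:ℝ) 1) (n : ℕ) {t : ℝ}
    (ht : 0 < t) (htx : t ≤ (Tbeta β)^[n] x) :
    ∃ y ∈ In β x n, (Tbeta β)^[n] y = t := by
  have hβn : 0 < β ^ n := pow_pos hβ n
  set y := x - ((Tbeta β)^[n] x - t) / β ^ n with hy
  have hyx : 0 ≤ ((Tbeta β)^[n] x - t) / β ^ n := div_nonneg (by linarith) hβn.le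
  have hyIn : y ∈ In β x n := Ioc_sub_subset_In hβ hx n
    ⟨sub_lt_sub_left (div_lt_div_of_pos_right (by linarith) hβn) x, by linarith⟩
  refine ⟨y, hyIn, ?_⟩
  have hshift : β ^ n * (y - x) = t - (Tbeta β)^[n] x := by rw [hy]; field_simp; ring
  linarith [iterate_Tbeta_sub_iterate_Tbeta hyIn.2]

lemma exists_mem_In_iterate_eq_one (hβ : 0 < β) (hx : x ∈ Ioc (0:ℝ) 1) (n : ℕ) :
    ∃ y ∈ In β x n, ∃ i ≤ n, (Tbeta β)^[i] y = 1 := by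
  obtain ⟨i, hi, hmin⟩ := Finset.exists_min_image (Finset.range (n + 1))
    (fun j => (1 - (Tbeta β)^[j] x) / β ^ j) ⟨0, by simp⟩
  -- the largest offset `δ` keeping every `T_β^j x + β^j δ` (`j ≤ n`) at most `1`
  set δ := (1 - (Tbeta β)^[i] x) / β ^ i with hδ
  have hδ0 : 0 ≤ δ := div_nonneg (by linarith [(iterate_Tbeta_mem_Ioc hβ hx i).2]) (by positivity)
  have hyIn : x + δ ∈ In β x n := add_mem_In fun j hj => by
    have hβj : 0 < β ^ j := pow_pos hβ j
    have hle := (le_div_iff₀ hβj).mp (hmin j (Finset.mem_range.mpr (Nat.lt_succ_of_le hj)))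
    exact ⟨by nlinarith [(iterate_Tbeta_mem_Ioc hβ hx j).1], by linarith⟩
  have hin : i ≤ n := Nat.lt_succ_iff.mp (Finset.mem_range.mp hi)
  refine ⟨x + δ, hyIn, i, hin, ?_⟩
  have hshift : β ^ i * (x + δ - x) = 1 - (Tbeta β)^[i] x := by rw [hδ]; field_simp; ring
  linarith [iterate_Tbeta_sub_iterate_Tbeta fun j hj => hyIn.2 j (hj.trans_le hin)]

lemma abs_sub_le_of_mem_In (hβ : 0 < β) (hx : x ∈ Ioc (0:ℝ) 1) {n : ℕ} (hy : y ∈ In β x n) :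
    |y - x| ≤ (β ^ n)⁻¹ := by
  have hβn : 0 < β ^ n := pow_pos hβ n
  have hTx := iterate_Tbeta_mem_Ioc hβ hx n
  have hTy := iterate_Tbeta_mem_Ioc hβ hy.1 n
  have habs : |β ^ n * (y - x)| ≤ 1 := by
    rw [← iterate_Tbeta_sub_iterate_Tbeta hy.2, abs_le]
    constructor <;> linarith [hTx.1, hTx.2, hTy.1, hTy.2]
  rw [abs_mul, abs_of_pos hβn, ← le_div_iff₀' hβn] at habs
  simpa using habs

/-- If this failed, the expansion of `T_β^m 1` would start with `t_m + 1` zeros. -/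
lemma inv_pow_tseq_succ_lt_iterate_one (hβ : 1 < β) (m : ℕ) :
    (β ^ (tseq β m + 1))⁻¹ < (Tbeta β)^[m] 1 := by
  have hβ0 : 0 < β := one_pos.trans hβ
  set z := (Tbeta β)^[m] 1
  have hz : z ∈ Ioc (0:ℝ) 1 := iterate_Tbeta_mem_Ioc hβ0 ⟨one_pos, le_rfl⟩ m
  have hzeros : {k : ℕ | ∀ j < k, eps β 1 (m + j) = 0} = {k | ∀ j < k, eps β z j = 0} := by
    simp only [z, eps_iterate_Tbeta]
  have hbdd : BddAbove {k : ℕ | ∀ j < k, eps β z j = 0} := by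
    obtain ⟨N, hN⟩ := pow_unbounded_of_one_lt z⁻¹ hβ
    refine ⟨N, fun k hk => ?_⟩
    by_contra! hNk
    have hle : β ^ k * z ≤ 1 := iterate_Tbeta_eq_pow_mul hk ▸ (iterate_Tbeta_mem_Ioc hβ0 hz k).2
    have := (inv_lt_iff_one_lt_mul₀ hz.1).mp (hN.trans (pow_lt_pow_right₀ hβ hNk))
    linarith
  have hnot : ¬ ∀ j < tseq β m + 1, eps β z j = 0 := fun h => by
    have := le_csSup hbdd h
    rw [← hzeros] at this
    exact Nat.not_succ_le_self _ this
  have hgt : 1 < β ^ (tseq β m + 1) * z := by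
    by_contra! hle
    exact hnot (eps_eq_zero_of_pow_mul_le_one hβ.le hz.1 hle)
  rwa [inv_lt_iff_one_lt_mul₀ (by positivity), mul_comm]

lemma cyl_eq_In (hx : x ∈ cyl β w) : cyl β w = In β x w.length := by
  ext y
  exact and_congr_right fun _ => forall₂_congr fun j hj => by rw [hx.2 j hj]

lemma mem_cyl_digits (hx : x ∈ Ioc (0:ℝ) 1) (k : ℕ) :
    x ∈ cyl β ((List.range k).map (eps β x)) := by
  refine ⟨hx, fun j hj => ?_⟩
  simp only [List.length_map, List.length_range] at hj
  simp [List.getD_eq_getElem?_getD, hj]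

lemma mem_cyl_append (hβ : 0 < β) :
    x ∈ cyl β (u ++ v) ↔ x ∈ cyl β u ∧ (Tbeta β)^[u.length] x ∈ cyl β v := by
  simp only [cyl, List.length_append]
  constructor
  · rintro ⟨hx, h⟩
    refine ⟨⟨hx, fun j hj => ?_⟩, iterate_Tbeta_mem_Ioc hβ hx _, fun j hj => ?_⟩
    · rw [h j (by omega), List.getD_append _ _ _ _ hj]
    · rw [eps_iterate_Tbeta, h _ (by omega), List.getD_append_right _ _ _ _ (by omega),
        Nat.add_sub_cancel_left]
  · rintro ⟨⟨hx, hu⟩, -, hv⟩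
    refine ⟨hx, fun j hj => ?_⟩
    by_cases hju : j < u.length
    · rw [hu j hju, List.getD_append _ _ _ _ hju]
    · rw [List.getD_append_right _ _ _ _ (by omega), ← hv _ (by omega), eps_iterate_Tbeta,
        Nat.add_sub_cancel' (by omega)]

lemma cyl_append_subset (hβ : 0 < β) : cyl β (u ++ v) ⊆ cyl β u :=
  fun _ hx => ((mem_cyl_append hβ).mp hx).1

lemma div_pow_mem_cyl_replicate_append (hβ : 1 ≤ β) (hy : y ∈ cyl β v) (s : ℕ) :
    y / β ^ s ∈ cyl β (List.replicate s 0 ++ v) := by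
  have hβs : 1 ≤ β ^ s := one_le_pow₀ hβ
  have hy' : β ^ s * (y / β ^ s) = y := by field_simp
  have hpos : 0 < y / β ^ s := div_pos hy.1.1 (by positivity)
  have hzeros := eps_eq_zero_of_pow_mul_le_one hβ hpos (hy'.symm ▸ hy.1.2)
  refine (mem_cyl_append (by linarith)).mpr ⟨⟨⟨hpos, ?_⟩, fun j hj => ?_⟩, ?_⟩
  · exact (div_le_self hy.1.1.le hβs).trans hy.1.2
  · rw [List.length_replicate] at hj
    rw [hzeros j hj, List.getD_replicate _ hj]
  · rwa [List.length_replicate, iterate_Tbeta_eq_pow_mul hzeros, hy']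

lemma cyl_append_replicate_append_nonempty (hβ : 1 ≤ β) (hx : x ∈ cyl β u) {s : ℕ}
    (hs : (β ^ s)⁻¹ ≤ (Tbeta β)^[u.length] x) (hv : (cyl β v).Nonempty) :
    (cyl β (u ++ List.replicate s 0 ++ v)).Nonempty := by
  have hβ0 : 0 < β := by linarith
  obtain ⟨y, hy⟩ := hv
  have hty : y / β ^ s ≤ (Tbeta β)^[u.length] x :=
    le_trans (by rw [div_eq_inv_mul]; exact mul_le_of_le_one_right (by positivity) hy.1.2) hs
  obtain ⟨x', hx'In, hx'T⟩ :=
    exists_mem_In_iterate_eq hβ0 hx.1 _ (div_pos hy.1.1 (by positivity)) hty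
  rw [List.append_assoc]
  refine ⟨x', (mem_cyl_append hβ0).mpr ⟨(cyl_eq_In hx).symm ▸ hx'In, ?_⟩⟩
  rw [hx'T]
  exact div_pow_mem_cyl_replicate_append hβ hy s

lemma exists_mem_cyl_inv_pow_Gam_succ_le (hβ : 1 < β) (hx : x ∈ cyl β w) :
    ∃ y ∈ cyl β w, (β ^ (Gam β w.length + 1))⁻¹ ≤ (Tbeta β)^[w.length] y := by
  have hβ0 : 0 < β := one_pos.trans hβ
  obtain ⟨y, hyIn, i, hi, hyi⟩ := exists_mem_In_iterate_eq_one hβ0 hx.1 w.length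
  refine ⟨y, (cyl_eq_In hx).symm ▸ hyIn, ?_⟩
  rw [← Nat.sub_add_cancel hi, Function.iterate_add_apply, hyi]
  rcases Nat.eq_zero_or_pos (w.length - i) with h0 | hlt
  · rw [h0, Function.iterate_zero_apply]
    exact inv_le_one_of_one_le₀ (one_le_pow₀ hβ.le)
  · have htG : tseq β (w.length - i) ≤ Gam β (w.length - i + i) := by
      rw [Nat.sub_add_cancel hi]
      exact Finset.le_sup (Finset.mem_Icc.mpr ⟨hlt, Nat.sub_le _ _⟩)
    refine le_trans ?_ (inv_pow_tseq_succ_lt_iterate_one hβ _).le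
    exact inv_anti₀ (by positivity) (pow_le_pow_right₀ hβ.le (by omega))

end Digits

/-- `ω = (ε*_1,…,ε*_m, 0^{t_m+1})`. -/
def omegaBlock (β : ℝ) (m : ℕ) : List ℤ := estarWord β m ++ List.replicate (tseq β m + 1) 0

/-- `(w, 0^{Γ_k+1}, ω_1, …, ω_k)`, with `ω_j` built from `m j`. -/
def uWord (β : ℝ) (m : ℕ → ℕ) (k : ℕ) (w : List ℤ) : List ℤ :=
  w ++ List.replicate (Gam β k + 1) 0 ++
    ((List.range k).map fun j => omegaBlock β (m (j + 1))).flatten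

/-- The `n`-th set in the intersection defining `U`. -/
def uSet (β : ℝ) (m : ℕ → ℕ) (n : ℕ) : Set ℝ :=
  ⋃ k : ℕ, ⋃ (_ : n ≤ k ∧ 1 ≤ k), ⋃ w : List ℤ, ⋃ (_ : w.length = k ∧ Admissible β w),
    intIn01 (cyl β (uWord β m k w))

section Density

variable {β : ℝ} {w : List ℤ}

lemma cyl_flatten_omegaBlock_nonempty (hβ : 1 < β) (ms : List ℕ) :
    (cyl β (ms.map (omegaBlock β)).flatten).Nonempty := by
  induction ms with
  | nil => exact ⟨1, ⟨one_pos, le_rfl⟩, fun j hj => absurd hj (by simp)⟩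
  | cons a ms ih =>
    rw [List.map_cons, List.flatten_cons, omegaBlock]
    refine cyl_append_replicate_append_nonempty hβ.le (mem_cyl_digits ⟨one_pos, le_rfl⟩ a) ?_ ih
    simpa using (inv_pow_tseq_succ_lt_iterate_one hβ a).le

lemma cyl_uWord_nonempty (hβ : 1 < β) (m : ℕ → ℕ) (hw : Admissible β w) :
    (cyl β (uWord β m w.length w)).Nonempty := by
  obtain ⟨x, hx⟩ := hw
  obtain ⟨y, hy, hyT⟩ := exists_mem_cyl_inv_pow_Gam_succ_le hβ hx
  refine cyl_append_replicate_append_nonempty hβ.le hy hyT ?_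
  have := cyl_flatten_omegaBlock_nonempty hβ ((List.range w.length).map fun j => m (j + 1))
  rwa [List.map_map] at this

lemma intIn01_subset (S : Set ℝ) : intIn01 S ⊆ S := fun _ hx =>
  by_contra fun hxS => hx.2 (subset_closure ⟨hx.1, hxS⟩)

lemma Icc_inter_interior_subset_intIn01 (S : Set ℝ) : Icc 0 1 ∩ interior S ⊆ intIn01 S :=
  fun _ ⟨hx, hxS⟩ => ⟨hx, fun hcl => by
    have : _ ∈ closure Sᶜ := closure_mono (fun _ hy => hy.2) hcl
    exact (closure_compl (s := S) ▸ this) hxS⟩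

lemma isOpen_preimage_intIn01 (S : Set ℝ) :
    IsOpen ((↑) ⁻¹' intIn01 S : Set (Icc (0:ℝ) 1)) := by
  have : ((↑) ⁻¹' intIn01 S : Set (Icc (0:ℝ) 1)) = ((↑) ⁻¹' closure (Icc 0 1 \ S))ᶜ := by
    ext x
    simp [intIn01]
  rw [this]
  exact (isClosed_closure.preimage continuous_subtype_val).isOpen_compl

lemma intIn01_cyl_nonempty (hβ : 0 < β) (h : (cyl β w).Nonempty) :
    (intIn01 (cyl β w)).Nonempty := by
  obtain ⟨x, hx⟩ := h
  set c := (Tbeta β)^[w.length] x / β ^ w.length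
  have hc : 0 < c := div_pos (iterate_Tbeta_mem_Ioc hβ hx.1 _).1 (by positivity)
  have hsub : Ioo (x - c) x ⊆ cyl β w :=
    Ioo_subset_Ioc_self.trans ((cyl_eq_In hx).symm ▸ Ioc_sub_subset_In hβ hx.1 w.length)
  have hp : x - c / 2 ∈ Ioo (x - c) x := ⟨by linarith, by linarith⟩
  exact ⟨x - c / 2, Icc_inter_interior_subset_intIn01 _
    ⟨Ioc_subset_Icc_self (hsub hp).1, interior_maximal hsub isOpen_Ioo hp⟩⟩

lemma Ioc_subset_closure_uSet (hβ : 1 < β) (m : ℕ → ℕ) (n : ℕ) :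
    Ioc 0 1 ⊆ closure (uSet β m n) := by
  have hβ0 : 0 < β := one_pos.trans hβ
  intro x hx
  rw [Metric.mem_closure_iff]
  intro ε hε
  obtain ⟨k₀, hk₀⟩ := pow_unbounded_of_one_lt ε⁻¹ hβ
  set k := max k₀ (max n 1)
  set w := (List.range k).map (eps β x)
  have hxw : x ∈ cyl β w := mem_cyl_digits hx k
  have hwk : w.length = k := by simp [w]
  obtain ⟨p, hp⟩ := intIn01_cyl_nonempty hβ0 (cyl_uWord_nonempty hβ m ⟨x, hxw⟩)
  have hpw : p ∈ In β x k := hwk ▸ cyl_eq_In hxw ▸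
    cyl_append_subset hβ0 (cyl_append_subset hβ0 (intIn01_subset _ hp))
  refine ⟨p, mem_iUnion₂.mpr ⟨k, ⟨le_max_of_le_right (le_max_left _ _),
    le_max_of_le_right (le_max_right _ _)⟩, mem_iUnion₂.mpr ⟨w, ⟨hwk, x, hxw⟩, hwk ▸ hp⟩⟩, ?_⟩
  rw [Real.dist_eq, abs_sub_comm]
  calc |p - x| ≤ (β ^ k)⁻¹ := abs_sub_le_of_mem_In hβ0 hx hpw
    _ < ε := by
      rw [inv_lt_comm₀ (by positivity) hε]
      exact hk₀.trans_le (pow_le_pow_right₀ hβ.le (le_max_left _ _))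

end Density

lemma subset_closure_iInter_of_isOpen {X : Type*} [TopologicalSpace X] {s : Set X} [BaireSpace s]
    {A : ℕ → Set X} (hsub : ∀ n, A n ⊆ s) (hopen : ∀ n, IsOpen ((↑) ⁻¹' A n : Set s))
    (hdense : ∀ n, s ⊆ closure (A n)) : s ⊆ closure (⋂ n, A n) := by
  have hD : Dense (⋂ n, ((↑) ⁻¹' A n : Set s)) := dense_iInter_of_isOpen hopen fun n x => by
    rw [closure_subtype, Subtype.image_preimage_coe, inter_eq_right.mpr (hsub n)]
    exact hdense n x.2
  intro x hx
  have := closure_subtype.mp (hD ⟨x, hx⟩)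
  exact closure_mono (by rw [← preimage_iInter]; exact image_preimage_subset _ _) this

theorem U_dense_general (β : ℝ) (hβ : 1 < β) (m : ℕ → ℕ) :
    closure (⋂ n : ℕ, ⋃ k : ℕ, ⋃ (_ : n ≤ k ∧ 1 ≤ k), ⋃ w : List ℤ,
        ⋃ (_ : w.length = k ∧ Admissible β w),
          intIn01 (cyl β (w ++ List.replicate (Gam β k + 1) 0 ++
            ((List.range k).map (fun j =>
              estarWord β (m (j + 1)) ++ List.replicate (tseq β (m (j + 1)) + 1) 0)).flatten)))
      = Icc (0:ℝ) 1 := by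
  change closure (⋂ n, uSet β m n) = Icc 0 1
  have hsub : ∀ n, uSet β m n ⊆ Icc 0 1 := fun n =>
    iUnion₂_subset fun _ _ => iUnion₂_subset fun _ _ => sdiff_subset
  refine (closure_minimal ((iInter_subset _ 0).trans (hsub 0)) isClosed_Icc).antisymm ?_
  refine subset_closure_iInter_of_isOpen hsub (fun n => ?_) fun n => ?_
  · simp only [uSet, preimage_iUnion]
    exact isOpen_iUnion fun _ => isOpen_iUnion fun _ => isOpen_iUnion fun _ =>
      isOpen_iUnion fun _ => isOpen_preimage_intIn01 _
  · rw [← closure_Ioc zero_ne_one]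
    exact closure_minimal (Ioc_subset_closure_uSet hβ m n) isClosed_closure

/-- Suppose `λ(β) > 0` and `(m_k)_{k ≥ 1}` is an increasing sequence of
positive integers with `lim_k t_{m_k}/m_k = λ(β)` and
`lim_k (k + Γ_k + 1 + Σ_{j=1}^{k−1}(m_j + t_{m_j} + 1))/m_k = 0`. Setting
`ω_k = (ε*_1,…,ε*_{m_k}, 0^{t_{m_k}+1})` and
`U = ∩_{n≥1} ∪_{k≥n} ∪_{(ε_1,…,ε_k) admissible} int(I(ε_1,…,ε_k, 0^{Γ_k+1}, ω_1,…,ω_k))`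
(interiors in `[0,1]`), the set `U` is dense in `[0,1]`. -/
theorem U_dense (β : ℝ) (hβ : 1 < β) (hlam : 0 < lam β)
    (m : ℕ → ℕ) (hmono : StrictMono m) (hpos : ∀ k, 0 < m k)
    (h1 : Tendsto (fun k => (tseq β (m k) : ℝ) / (m k : ℝ)) atTop (nhds (lam β)))
    (h2 : Tendsto (fun k : ℕ =>
        ((k : ℝ) + (Gam β k : ℝ) + 1 +
            ∑ j ∈ Finset.Icc 1 (k - 1), ((m j : ℝ) + (tseq β (m j) : ℝ) + 1)) / (m k : ℝ))
      atTop (nhds 0)) :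
    closure (⋂ n : ℕ, ⋃ k : ℕ, ⋃ (_ : n ≤ k ∧ 1 ≤ k), ⋃ w : List ℤ,
        ⋃ (_ : w.length = k ∧ Admissible β w),
          intIn01 (cyl β (w ++ List.replicate (Gam β k + 1) 0 ++
            ((List.range k).map (fun j =>
              estarWord β (m (j + 1)) ++ List.replicate (tseq β (m (j + 1)) + 1) 0)).flatten)))
      = Icc (0:ℝ) 1 :=
  U_dense_general β hβ m
end
end

section
/- Let (ε_1,…,ε_n) be an admissible word with n ≥ 1. The basic interval I(ε_1,…,ε_n) is full (i.e. |I(ε_1,…,ε_n)| = β^{−n}) if and only if for every m ≥ 1 and every admissible word (ε'_1,…,ε'_m), the concatenation (ε_1,…,ε_n,ε'_1,…,ε'_m) is admissible. -/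
open MeasureTheory Filter Set

noncomputable section

/-! On the cylinder `I(w)`, `T_β^n` (`n = |w|`) is the increasing affine map `shiftMap β w` of
slope `β^n`, and `w ++ w'` is admissible iff `J = T_β^n (I(w))` meets `I(w')`. Since `I(w)` is an
interval, so is `J ⊆ (0,1]`, and `|I(w)| = β^{-n} |J|`; hence `I(w)` is full iff `J ⊇ (0,1)`.
In that case `J` meets every cylinder, because a cylinder is a left neighbourhood of each of its
points. Conversely, cylinders of order `m` have diameter `< β^{-m}`, so if `J` meets all of them
then `J` is dense in `(0,1]`, and an interval dense in `(0,1]` contains `(0,1)`. -/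

open Topology

lemma cyl_nil (β : ℝ) : cyl β [] = Ioc 0 1 := by
  ext x
  simp [cyl]

lemma cyl_subset_Ioc (β : ℝ) (w : List ℤ) : cyl β w ⊆ Ioc 0 1 := fun _ hx => hx.1

lemma eps_succ (β x : ℝ) (j : ℕ) : eps β x (j + 1) = eps β (Tbeta β x) j := by
  simp only [eps, Function.iterate_succ_apply]

lemma eps_zero_eq_iff {β x : ℝ} {d : ℤ} : eps β x 0 = d ↔ β * x - d ∈ Ioc 0 1 := by
  rw [eps, Function.iterate_zero_apply, sub_eq_iff_eq_add, Int.ceil_eq_iff, mem_Ioc]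
  push_cast
  constructor <;> rintro ⟨h₁, h₂⟩ <;> constructor <;> linarith

lemma Tbeta_of_eps_zero_eq {β x : ℝ} {d : ℤ} (h : eps β x 0 = d) : Tbeta β x = β * x - d := by
  rw [Tbeta, ← h, eps, Function.iterate_zero_apply]
  push_cast
  ring

lemma mem_cyl_cons {β x : ℝ} {d : ℤ} {w : List ℤ} :
    x ∈ cyl β (d :: w) ↔ x ∈ Ioc 0 1 ∧ β * x - d ∈ cyl β w := by
  simp only [cyl, mem_ofPred_eq, List.length_cons, Nat.forall_lt_succ_left, List.getD_cons_zero,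
    List.getD_cons_succ, eps_succ]
  constructor
  · rintro ⟨hx, h₀, hw⟩
    rw [← Tbeta_of_eps_zero_eq h₀]
    exact ⟨hx, Tbeta_of_eps_zero_eq h₀ ▸ eps_zero_eq_iff.1 h₀, hw⟩
  · rintro ⟨hx, hT, hw⟩
    have h₀ := eps_zero_eq_iff.2 hT
    rw [Tbeta_of_eps_zero_eq h₀]
    exact ⟨hx, h₀, hw⟩

lemma ordConnected_cyl {β : ℝ} (hβ : 0 ≤ β) (w : List ℤ) : (cyl β w).OrdConnected := by
  induction w with
  | nil => simpa [cyl_nil] using ordConnected_Ioc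
  | cons d w ih =>
    have : cyl β (d :: w) = Ioc 0 1 ∩ (fun x => β * x - d) ⁻¹' cyl β w := by
      ext x; exact mem_cyl_cons
    rw [this]
    exact ordConnected_Ioc.inter (ih.preimage_mono fun x y hxy => by gcongr)

lemma cyl_mem_nhdsLE {β x : ℝ} (hβ : 0 ≤ β) {w : List ℤ} (hx : x ∈ cyl β w) :
    cyl β w ∈ 𝓝[≤] x := by
  induction w generalizing x with
  | nil =>
    rw [cyl_nil] at hx ⊢
    exact Ioc_mem_nhdsLE_of_mem hx
  | cons d w ih =>
    rw [mem_cyl_cons] at hx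
    have hcont : Tendsto (fun y => β * y - d) (𝓝[≤] x) (𝓝[≤] (β * x - d)) :=
      (Continuous.continuousWithinAt (by fun_prop)).tendsto_nhdsWithin
        fun y (hy : y ≤ x) => show β * y - d ≤ β * x - d by gcongr
    filter_upwards [Ioc_mem_nhdsLE_of_mem hx.1, hcont (ih hx.2)] with y hy₁ hy₂
    exact mem_cyl_cons.2 ⟨hy₁, hy₂⟩

/-- The affine branch `x ↦ β^{|w|} x - Σ εᵢ β^{|w|-i}` of `T_β^{|w|}` on `cyl β w`. -/
def shiftMap (β : ℝ) : List ℤ → ℝ → ℝ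
  | [], x => x
  | d :: w, x => shiftMap β w (β * x - d)

lemma shiftMap_apply (β x : ℝ) (w : List ℤ) :
    shiftMap β w x = β ^ w.length * x + shiftMap β w 0 := by
  induction w generalizing x with
  | nil => simp [shiftMap]
  | cons d w ih =>
    rw [shiftMap, shiftMap, ih, ih (β * 0 - d), List.length_cons]
    ring

lemma mem_cyl_append_s16 {β x : ℝ} {w w' : List ℤ} :
    x ∈ cyl β (w ++ w') ↔ x ∈ cyl β w ∧ shiftMap β w x ∈ cyl β w' := by
  induction w generalizing x with
  | nil => simpa [shiftMap, cyl_nil] using fun h => cyl_subset_Ioc β w' h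
  | cons d w ih => simp only [List.cons_append, mem_cyl_cons, ih, shiftMap, and_assoc]

lemma admissible_append_iff {β : ℝ} {w w' : List ℤ} :
    Admissible β (w ++ w') ↔ (shiftMap β w '' cyl β w ∩ cyl β w').Nonempty := by
  simp only [Admissible, Set.Nonempty, mem_cyl_append_s16, mem_inter_iff, mem_image]
  constructor
  · rintro ⟨x, hx, hx'⟩
    exact ⟨_, ⟨x, hx, rfl⟩, hx'⟩
  · rintro ⟨_, ⟨x, hx, rfl⟩, hx'⟩
    exact ⟨x, hx, hx'⟩

lemma image_shiftMap_cyl_subset (β : ℝ) (w : List ℤ) : shiftMap β w '' cyl β w ⊆ Ioc 0 1 := by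
  rintro _ ⟨x, hx, rfl⟩
  rw [← cyl_nil β]
  exact (mem_cyl_append_s16.1 ((List.append_nil w).symm ▸ hx)).2

lemma shiftMap_eq_comp (β : ℝ) (w : List ℤ) :
    shiftMap β w = (· + shiftMap β w 0) ∘ (β ^ w.length * ·) :=
  funext fun x => shiftMap_apply β x w

lemma shiftMap_injective {β : ℝ} (hβ : 0 < β) (w : List ℤ) :
    Function.Injective (shiftMap β w) := by
  rw [shiftMap_eq_comp]
  exact (add_left_injective _).comp (mul_right_injective₀ (pow_pos hβ w.length).ne')

lemma volume_preimage_shiftMap {β : ℝ} (hβ : 0 < β) (w : List ℤ) (s : Set ℝ) :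
    volume (shiftMap β w ⁻¹' s) = ENNReal.ofReal (β ^ w.length)⁻¹ * volume s := by
  have hpos : 0 < β ^ w.length := pow_pos hβ w.length
  rw [shiftMap_eq_comp, preimage_comp, Real.volume_preimage_mul_left hpos.ne',
    measure_preimage_add_right, abs_of_pos (inv_pos.2 hpos)]

lemma ordConnected_image_shiftMap_cyl {β : ℝ} (hβ : 0 < β) (w : List ℤ) :
    (shiftMap β w '' cyl β w).OrdConnected := by
  have hiso : shiftMap β w =
      (OrderIso.mulLeft₀ _ (pow_pos hβ w.length)).trans (OrderIso.addRight (shiftMap β w 0)) :=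
    shiftMap_eq_comp β w
  have := ordConnected_cyl hβ.le w
  rw [hiso]
  exact ordConnected_image _

lemma volume_cyl {β : ℝ} (hβ : 0 < β) (w : List ℤ) :
    volume (cyl β w) =
      ENNReal.ofReal (β ^ w.length)⁻¹ * volume (shiftMap β w '' cyl β w) := by
  rw [← volume_preimage_shiftMap hβ, preimage_image_eq _ (shiftMap_injective hβ w)]

lemma Set.OrdConnected.Ioo_subset_of_volume_eq {s : Set ℝ} (hs : s.OrdConnected) {a b : ℝ}
    (hsub : s ⊆ Icc a b) (hvol : volume s = ENNReal.ofReal (b - a)) : Ioo a b ⊆ s := by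
  intro y hy
  by_contra hys
  have hside : s ⊆ Icc a y ∨ s ⊆ Icc y b := by
    by_contra! h
    obtain ⟨⟨u, hu, hu'⟩, ⟨v, hv, hv'⟩⟩ := And.imp not_subset.1 not_subset.1 h
    have hyu : y < u := lt_of_not_ge fun hle => hu' ⟨(hsub hu).1, hle⟩
    have hvy : v < y := lt_of_not_ge fun hle => hv' ⟨hle, (hsub hv).2⟩
    exact hys (hs.out hv hu ⟨hvy.le, hyu.le⟩)
  have hlt : volume s < ENNReal.ofReal (b - a) := by
    rcases hside with h | h
    · refine (measure_mono h).trans_lt ?_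
      rw [Real.volume_Icc, ENNReal.ofReal_lt_ofReal_iff (by linarith [hy.1, hy.2])]
      linarith [hy.2]
    · refine (measure_mono h).trans_lt ?_
      rw [Real.volume_Icc, ENNReal.ofReal_lt_ofReal_iff (by linarith [hy.1, hy.2])]
      linarith [hy.1]
  exact hlt.ne hvol

lemma Set.OrdConnected.Ioo_subset_of_mem_closure {α : Type*} [LinearOrder α] [TopologicalSpace α]
    [OrderClosedTopology α] {s : Set α} (hs : s.OrdConnected) {a b : α} (ha : a ∈ closure s)
    (hb : b ∈ closure s) : Ioo a b ⊆ s := by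
  intro y hy
  obtain ⟨u, hu, hus⟩ := mem_closure_iff_nhds.1 ha _ (Iio_mem_nhds hy.1)
  obtain ⟨v, hv, hvs⟩ := mem_closure_iff_nhds.1 hb _ (Ioi_mem_nhds hy.2)
  exact hs.out hus hvs ⟨hu.le, hv.le⟩

lemma abs_sub_lt_of_mem_cyl {β u v : ℝ} (hβ : 0 < β) {w : List ℤ} (hu : u ∈ cyl β w)
    (hv : v ∈ cyl β w) : |u - v| < (β ^ w.length)⁻¹ := by
  have hpos : 0 < β ^ w.length := pow_pos hβ w.length
  have hu' := image_shiftMap_cyl_subset β w (mem_image_of_mem _ hu)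
  have hv' := image_shiftMap_cyl_subset β w (mem_image_of_mem _ hv)
  rw [shiftMap_apply] at hu' hv'
  rw [← mul_lt_mul_iff_of_pos_left hpos, mul_inv_cancel₀ hpos.ne', ← abs_of_pos hpos, ← abs_mul,
    mul_sub, abs_sub_lt_iff]
  constructor <;> linarith [hu'.1, hu'.2, hv'.1, hv'.2]

lemma mem_cyl_map_eps {β z : ℝ} (hz : z ∈ Ioc 0 1) (m : ℕ) :
    z ∈ cyl β ((List.range m).map (eps β z)) := by
  refine ⟨hz, fun j hj => ?_⟩
  simp_all [List.getD_eq_getElem?_getD]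

lemma mem_closure_of_eventually_inter_cyl {β z : ℝ} (hβ : 1 < β) (hz : z ∈ Ioc 0 1) {s : Set ℝ}
    (h : ∀ᶠ m in atTop, (s ∩ cyl β ((List.range m).map (eps β z))).Nonempty) :
    z ∈ closure s := by
  have hβ₀ : 0 < β := zero_lt_one.trans hβ
  have hsmall : Tendsto (fun m : ℕ => (β ^ m)⁻¹) atTop (𝓝 0) :=
    tendsto_inv_atTop_zero.comp (tendsto_pow_atTop_atTop_of_one_lt hβ)
  refine Metric.mem_closure_iff.2 fun ε hε => ?_
  obtain ⟨m, hm, u, hus, hu⟩ := ((hsmall.eventually (gt_mem_nhds hε)).and h).exists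
  refine ⟨u, hus, ?_⟩
  have := abs_sub_lt_of_mem_cyl hβ₀ (mem_cyl_map_eps hz m) hu
  rw [Real.dist_eq]
  simp only [List.length_map, List.length_range] at this
  linarith

lemma Admissible.inter_Ioo_nonempty {β : ℝ} (hβ : 0 ≤ β) {w : List ℤ} (h : Admissible β w) :
    (cyl β w ∩ Ioo 0 1).Nonempty := by
  obtain ⟨y, hy⟩ := h
  have hcyl : cyl β w ∈ 𝓝[<] y := nhdsWithin_mono _ Iio_subset_Iic_self (cyl_mem_nhdsLE hβ hy)
  obtain ⟨u, hu, hu₀, huy⟩ :=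
    Filter.nonempty_of_mem (inter_mem hcyl (Ioo_mem_nhdsLT (cyl_subset_Ioc β w hy).1))
  exact ⟨u, hu, hu₀, huy.trans_le (cyl_subset_Ioc β w hy).2⟩

lemma isFull_iff_Ioo_subset_image {β : ℝ} (hβ : 0 < β) (w : List ℤ) :
    IsFull β w ↔ Ioo 0 1 ⊆ shiftMap β w '' cyl β w := by
  have hpos : 0 < β ^ w.length := pow_pos hβ w.length
  have hJ : shiftMap β w '' cyl β w ⊆ Ioc 0 1 := image_shiftMap_cyl_subset β w
  have hfull : IsFull β w ↔ volume (shiftMap β w '' cyl β w) = 1 := by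
    rw [IsFull, len, volume_cyl hβ, ENNReal.toReal_mul, ENNReal.toReal_ofReal (inv_pos.2 hpos).le,
      zpow_neg, zpow_natCast, mul_eq_left₀ (inv_ne_zero hpos.ne'), ENNReal.toReal_eq_one_iff]
  rw [hfull]
  constructor
  · intro h
    refine (ordConnected_image_shiftMap_cyl hβ w).Ioo_subset_of_volume_eq
      (hJ.trans Ioc_subset_Icc_self) (by simpa using h)
  · intro h
    apply le_antisymm
    · simpa using measure_mono (μ := volume) hJ
    · simpa using measure_mono (μ := volume) h

theorem full_iff_concat_admissible_general (β : ℝ) (hβ : 1 < β) (w : List ℤ) :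
    IsFull β w ↔ ∀ w' : List ℤ, 1 ≤ w'.length → Admissible β w' → Admissible β (w ++ w') := by
  have hβ₀ : 0 < β := zero_lt_one.trans hβ
  rw [isFull_iff_Ioo_subset_image hβ₀]
  constructor
  · intro hsub w' _ hw'
    obtain ⟨y, hy, hy₀₁⟩ := hw'.inter_Ioo_nonempty hβ₀.le
    exact admissible_append_iff.2 ⟨y, hsub hy₀₁, hy⟩
  · intro H
    have hclosure : Ioc 0 1 ⊆ closure (shiftMap β w '' cyl β w) := fun z hz =>
      mem_closure_of_eventually_inter_cyl hβ hz <| (eventually_ge_atTop 1).mono fun m hm =>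
        admissible_append_iff.1 (H _ (by simpa using hm) ⟨z, mem_cyl_map_eps hz m⟩)
    have hIcc : Icc 0 1 ⊆ closure (shiftMap β w '' cyl β w) := by
      simpa [closure_Ioc zero_ne_one] using closure_minimal hclosure isClosed_closure
    exact (ordConnected_image_shiftMap_cyl hβ₀ w).Ioo_subset_of_mem_closure
      (hIcc (left_mem_Icc.2 zero_le_one)) (hIcc (right_mem_Icc.2 zero_le_one))

/-- Let `(ε_1,…,ε_n)` be an admissible word, `n ≥ 1`. The basic interval
`I(ε_1,…,ε_n)` is full (its length is `β^{−n}`) if and only if for every `m ≥ 1` and every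
admissible word `(ε'_1,…,ε'_m)` the concatenation `(ε_1,…,ε_n,ε'_1,…,ε'_m)` is admissible. -/
theorem full_iff_concat_admissible (β : ℝ) (hβ : 1 < β) (w : List ℤ)
    (hn : 1 ≤ w.length) (hadm : Admissible β w) :
    IsFull β w ↔ ∀ w' : List ℤ, 1 ≤ w'.length → Admissible β w' → Admissible β (w ++ w') :=
  full_iff_concat_admissible_general β hβ w
end
end

section
/- Let (ε_1,…,ε_n) be an admissible word with n ≥ 1 and let k_n* = inf{k ≥ 0 : (ε_{k+1},…,ε_n) = (ε*_1,…,ε*_{n−k})}. Then the length of the basic interval satisfies |I(ε_1,…,ε_n)| = β^{−k_n*} · |I(ε*_1,…,ε*_{n−k_n*})|. -/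
open MeasureTheory Filter Set

noncomputable section

/-- `k_n^*` for a finite word `w = (ε_1,…,ε_n)`: the smallest `k ≥ 0` with
`(ε_{k+1},…,ε_n) = (ε*_1,…,ε*_{n−k})`. -/
def kstarWord (β : ℝ) (w : List ℤ) : ℕ :=
  sInf {k : ℕ | ∀ i < w.length - k, w.getD (k + i) 0 = eps β 1 i}

/-!
For `x` in the cylinder of an admissible word `w = (w_0,…,w_{n-1})` one has
`T_β^k x = β^k (x - c_k)` with `c_k = ∑_{i<k} w_i β^{-(i+1)}`, so the cylinder is the interval
`(c_n, min_{k ≤ n} (c_k + β^{-k})]`. At an index `k` attaining the minimum the right endpoint is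
mapped to `1` by `T_β^k`, so the digits of `w` from `k` on are those of `1` and `k ≥ k_n^*`.
The minimum may therefore be taken over `k ≥ k_n^*` only, and on that range, since the digits of
`w` from `k_n^*` on are `ε*_1,…,ε*_{n-k_n^*}`, the quantities `c_k + β^{-k} - c_n` are `β^{-k_n^*}`
times the corresponding ones for the word `(ε*_1,…,ε*_{n-k_n^*})`.
-/

namespace BetaExpansion

lemma Tbeta_mem_Ioc (β x : ℝ) : Tbeta β x ∈ Ioc (0 : ℝ) 1 := by
  unfold Tbeta
  constructor
  · linarith [Int.ceil_lt_add_one (β * x)]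
  · linarith [Int.le_ceil (β * x)]

lemma iterate_Tbeta_mem_Ioc {β x : ℝ} (hx : x ∈ Ioc (0 : ℝ) 1) (k : ℕ) :
    (Tbeta β)^[k] x ∈ Ioc (0 : ℝ) 1 := by
  cases k with
  | zero => exact hx
  | succ k => rw [Function.iterate_succ_apply']; exact Tbeta_mem_Ioc β _

lemma iterate_Tbeta_succ (β x : ℝ) (k : ℕ) :
    (Tbeta β)^[k + 1] x = β * (Tbeta β)^[k] x - eps β x k := by
  rw [Function.iterate_succ_apply']
  simp only [Tbeta, eps]
  push_cast
  ring

lemma eps_add_of_iterate_eq_one {β y : ℝ} {k : ℕ} (h : (Tbeta β)^[k] y = 1) (i : ℕ) :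
    eps β y (k + i) = eps β 1 i := by
  rw [eps, add_comm, Function.iterate_add_apply, h, eps]

lemma ceil_sub_one_eq_of_sub_mem_Ioc {r : ℝ} {d : ℤ} (h : r - d ∈ Ioc (0 : ℝ) 1) :
    ⌈r⌉ - 1 = d := by
  rw [sub_eq_iff_eq_add, Int.ceil_eq_iff]
  push_cast
  constructor <;> linarith [h.1, h.2]

lemma _root_.Admissible.getD_nonneg {β : ℝ} (hβ : 0 < β) {w : List ℤ} (h : Admissible β w) (i : ℕ) :
    0 ≤ w.getD i 0 := by
  obtain ⟨x, hx, hdig⟩ := h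
  by_cases hi : i < w.length
  · rw [← hdig i hi, eps, sub_nonneg, Int.one_le_ceil_iff]
    exact mul_pos hβ (iterate_Tbeta_mem_Ioc hx i).1
  · rw [List.getD_eq_default _ _ (not_lt.mp hi)]

lemma estarWord_getD (β : ℝ) {m i : ℕ} (hi : i < m) : (estarWord β m).getD i 0 = eps β 1 i := by
  simp [estarWord, hi]

lemma admissible_estarWord (β : ℝ) (m : ℕ) : Admissible β (estarWord β m) :=
  ⟨1, ⟨one_pos, le_rfl⟩, fun j hj => by
    rw [estarWord_getD β (by simpa [estarWord] using hj)]⟩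

lemma kstarWord_le_length (β : ℝ) (w : List ℤ) : kstarWord β w ≤ w.length :=
  Nat.sInf_le fun i hi => absurd hi (by omega)

lemma getD_kstarWord_add (β : ℝ) (w : List ℤ) :
    ∀ i < w.length - kstarWord β w, w.getD (kstarWord β w + i) 0 = eps β 1 i :=
  Nat.sInf_mem (s := {k | ∀ i < w.length - k, w.getD (k + i) 0 = eps β 1 i})
    ⟨w.length, fun i hi => absurd hi (by omega)⟩

variable {β : ℝ} {w : List ℤ}

def wordValue (β : ℝ) (w : List ℤ) (k : ℕ) : ℝ :=
  ∑ i ∈ Finset.range k, (w.getD i 0 : ℝ) / β ^ (i + 1)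

def cylUpper (β : ℝ) (w : List ℤ) : ℝ :=
  (Finset.range (w.length + 1)).inf' Finset.nonempty_range_add_one
    fun k => wordValue β w k + (β ^ k)⁻¹

def remainder (β : ℝ) (w : List ℤ) (k : ℕ) (x : ℝ) : ℝ := β ^ k * (x - wordValue β w k)

lemma wordValue_succ (β : ℝ) (w : List ℤ) (k : ℕ) :
    wordValue β w (k + 1) = wordValue β w k + w.getD k 0 / β ^ (k + 1) :=
  Finset.sum_range_succ _ _

lemma wordValue_mono (hβ : 0 < β) (hw : ∀ i, 0 ≤ w.getD i 0) : Monotone (wordValue β w) :=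
  monotone_nat_of_le_succ fun k => by
    rw [wordValue_succ]
    have : (0 : ℝ) ≤ w.getD k 0 := by exact_mod_cast hw k
    have := pow_pos hβ (k + 1)
    exact le_add_of_nonneg_right (by positivity)

lemma wordValue_add {v : List ℤ} {K d : ℕ} (hβ : β ≠ 0)
    (hsuf : ∀ i < d, w.getD (K + i) 0 = v.getD i 0) :
    wordValue β w (K + d) = wordValue β w K + wordValue β v d / β ^ K := by
  simp only [wordValue, Finset.sum_range_add, Finset.sum_div]
  congr 1
  refine Finset.sum_congr rfl fun i hi => ?_
  rw [hsuf i (Finset.mem_range.mp hi)]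
  field_simp
  ring

lemma remainder_succ (hβ : β ≠ 0) (k : ℕ) (x : ℝ) :
    remainder β w (k + 1) x = β * remainder β w k x - w.getD k 0 := by
  simp only [remainder, wordValue_succ]
  field_simp
  ring

lemma iterate_Tbeta_eq_remainder (hβ : β ≠ 0) {x : ℝ} {k : ℕ}
    (h : ∀ j < k, eps β x j = w.getD j 0) : (Tbeta β)^[k] x = remainder β w k x := by
  induction k with
  | zero => simp [remainder, wordValue]
  | succ k ih =>
    rw [iterate_Tbeta_succ, ih fun j hj => h j (by omega), h k k.lt_add_one, remainder_succ hβ]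

lemma mem_cyl_iff (hβ : β ≠ 0) (x : ℝ) :
    x ∈ cyl β w ↔ ∀ k ≤ w.length, remainder β w k x ∈ Ioc (0 : ℝ) 1 := by
  constructor
  · rintro ⟨hx, hdig⟩ k hk
    rw [← iterate_Tbeta_eq_remainder hβ fun j hj => hdig j (by omega)]
    exact iterate_Tbeta_mem_Ioc hx k
  · intro h
    refine ⟨by simpa [remainder, wordValue] using h 0 (Nat.zero_le _), fun j => ?_⟩
    induction j using Nat.strong_induction_on with
    | _ j ih =>
      intro hj
      have hT := iterate_Tbeta_eq_remainder hβ fun i hi => ih i hi (hi.trans hj)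
      rw [eps, hT]
      apply ceil_sub_one_eq_of_sub_mem_Ioc
      rw [← remainder_succ hβ]
      exact h (j + 1) hj

lemma remainder_mem_Ioc_iff (hβ : 0 < β) (k : ℕ) (x : ℝ) :
    remainder β w k x ∈ Ioc (0 : ℝ) 1 ↔
      x ∈ Ioc (wordValue β w k) (wordValue β w k + (β ^ k)⁻¹) := by
  have hp := pow_pos hβ k
  simp only [remainder, mem_Ioc, mul_pos_iff_of_pos_left hp, sub_pos, ← le_div_iff₀' hp,
    one_div, sub_le_iff_le_add']

lemma cyl_eq_Ioc (hβ : 0 < β) (hw : ∀ i, 0 ≤ w.getD i 0) :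
    cyl β w = Ioc (wordValue β w w.length) (cylUpper β w) := by
  ext x
  simp only [mem_cyl_iff hβ.ne', remainder_mem_Ioc_iff hβ, cylUpper, mem_Ioc, Finset.le_inf'_iff,
    Finset.mem_range, Nat.lt_succ_iff]
  constructor
  · intro h
    exact ⟨(h _ le_rfl).1, fun k hk => (h k hk).2⟩
  · rintro ⟨hlt, hle⟩ k hk
    exact ⟨(wordValue_mono hβ hw hk).trans_lt hlt, hle k hk⟩

lemma len_cyl (hβ : 0 < β) (hw : ∀ i, 0 ≤ w.getD i 0) :
    len (cyl β w) = max (cylUpper β w - wordValue β w w.length) 0 := by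
  rw [len, cyl_eq_Ioc hβ hw, Real.volume_Ioc, ENNReal.toReal_ofReal']

lemma cylUpper_le {k : ℕ} (hk : k ≤ w.length) : cylUpper β w ≤ wordValue β w k + (β ^ k)⁻¹ :=
  Finset.inf'_le _ (Finset.mem_range.mpr (Nat.lt_succ_of_le hk))

lemma exists_cylUpper_eq (β : ℝ) (w : List ℤ) :
    ∃ k ≤ w.length, cylUpper β w = wordValue β w k + (β ^ k)⁻¹ := by
  obtain ⟨k, hk, h⟩ := Finset.exists_mem_eq_inf' Finset.nonempty_range_add_one
    fun k => wordValue β w k + (β ^ k)⁻¹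
  exact ⟨k, Nat.lt_succ_iff.mp (Finset.mem_range.mp hk), h⟩

lemma exists_cylUpper_eq_of_kstarWord_le (hβ : 0 < β) (hadm : Admissible β w) :
    ∃ k, kstarWord β w ≤ k ∧ k ≤ w.length ∧ cylUpper β w = wordValue β w k + (β ^ k)⁻¹ := by
  obtain ⟨k, hk, hmin⟩ := exists_cylUpper_eq β w
  have hcyl := cyl_eq_Ioc hβ (hadm.getD_nonneg hβ)
  have hupper : cylUpper β w ∈ cyl β w := by
    obtain ⟨x, hx⟩ := hadm
    rw [hcyl] at hx ⊢
    exact ⟨hx.1.trans_le hx.2, le_rfl⟩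
  have hone : (Tbeta β)^[k] (cylUpper β w) = 1 := by
    rw [iterate_Tbeta_eq_remainder hβ.ne' fun j hj => hupper.2 j (by omega), remainder, hmin,
      add_sub_cancel_left, mul_inv_cancel₀ (pow_pos hβ k).ne']
  refine ⟨k, Nat.sInf_le fun i hi => ?_, hk, hmin⟩
  rw [← hupper.2 (k + i) (by omega), eps_add_of_iterate_eq_one hone]

lemma cylUpper_sub_wordValue_of_suffix (hβ : 0 < β) {v : List ℤ} {K : ℕ}
    (hlen : K + v.length = w.length) (hsuf : ∀ i < v.length, w.getD (K + i) 0 = v.getD i 0)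
    (hmin : ∃ k, K ≤ k ∧ k ≤ w.length ∧ cylUpper β w = wordValue β w k + (β ^ k)⁻¹) :
    cylUpper β w - wordValue β w w.length
      = (cylUpper β v - wordValue β v v.length) / β ^ K := by
  have hgap : ∀ d ≤ v.length, wordValue β w (K + d) + (β ^ (K + d))⁻¹ - wordValue β w w.length
      = (wordValue β v d + (β ^ d)⁻¹ - wordValue β v v.length) / β ^ K := by
    intro d hd
    rw [← hlen, wordValue_add hβ.ne' fun i hi => hsuf i (by omega),
      wordValue_add hβ.ne' hsuf, pow_add]
    field_simp
    ring
  apply le_antisymm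
  · obtain ⟨d, hd, hv⟩ := exists_cylUpper_eq β v
    rw [hv, ← hgap d hd]
    exact sub_le_sub_right (cylUpper_le (by omega)) _
  · obtain ⟨k, hKk, hk, hw⟩ := hmin
    obtain ⟨d, rfl⟩ := Nat.exists_eq_add_of_le hKk
    rw [hw, hgap d (by omega)]
    gcongr
    exact cylUpper_le (by omega)

end BetaExpansion

open BetaExpansion

theorem len_cyl_eq_kstar_general (β : ℝ) (hβ : 1 < β) (w : List ℤ)
    (hadm : Admissible β w) :
    len (cyl β w)
      = β ^ (-(kstarWord β w : ℤ)) * len (cyl β (estarWord β (w.length - kstarWord β w))) := by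
  have hβ0 : 0 < β := zero_lt_one.trans hβ
  set K := kstarWord β w
  set u := estarWord β (w.length - K)
  have hulen : u.length = w.length - K := by simp [u, estarWord]
  have hlen : K + u.length = w.length := by
    rw [hulen, Nat.add_sub_of_le (kstarWord_le_length β w)]
  have hsuf : ∀ i < u.length, w.getD (K + i) 0 = u.getD i 0 := fun i hi => by
    rw [hulen] at hi
    rw [estarWord_getD β hi, getD_kstarWord_add β w i hi]
  rw [len_cyl hβ0 (hadm.getD_nonneg hβ0), len_cyl hβ0 ((admissible_estarWord β _).getD_nonneg hβ0),
    cylUpper_sub_wordValue_of_suffix hβ0 hlen hsuf (exists_cylUpper_eq_of_kstarWord_le hβ0 hadm),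
    zpow_neg, zpow_natCast, div_eq_inv_mul, mul_max_of_nonneg _ _ (by positivity), mul_zero]

/-- Let `(ε_1,…,ε_n)` be an admissible word, `n ≥ 1`, and let
`k_n^* = inf{k ≥ 0 : (ε_{k+1},…,ε_n) = (ε*_1,…,ε*_{n−k})}`. Then
`|I(ε_1,…,ε_n)| = β^{−k_n^*} · |I(ε*_1,…,ε*_{n−k_n^*})|`. -/
theorem len_cyl_eq_kstar (β : ℝ) (hβ : 1 < β) (w : List ℤ)
    (hn : 1 ≤ w.length) (hadm : Admissible β w) :
    len (cyl β w)
      = β ^ (-(kstarWord β w : ℤ)) * len (cyl β (estarWord β (w.length - kstarWord β w))) :=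
  len_cyl_eq_kstar_general β hβ w hadm
end
end
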